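/- Let 0 < s ≤ 1/5. For each ε > 0 let u^ε be a continuous 1-periodic viscosity solution of ε u^ε(x) + F(|3/2 + (u^ε)'(x)|) − V(x) = 0 on 𝕋. Then there exists a continuous 1-periodic viscosity solution u⁰ of F(|3/2 + (u⁰)'(x)|) − V(x) = 1 on 𝕋 such that u^ε + 1/ε converges uniformly to u⁰ as ε → 0⁺. -/

import Mathlib

open Filter Set
open scoped Topology

noncomputable section

/-- Viscosity subsolution of `E(x, u(x), u'(x)) = 0` on `ℝ`. -/
def ViscSub1 (E : ℝ → ℝ → ℝ → ℝ) (u : ℝ → ℝ) : Prop :=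
  ∀ φ : ℝ → ℝ, ContDiff ℝ 1 φ → ∀ x₀ : ℝ, IsLocalMax (u - φ) x₀ →
    E x₀ (u x₀) (deriv φ x₀) ≤ 0

/-- Viscosity supersolution of `E(x, u(x), u'(x)) = 0` on `ℝ`. -/
def ViscSuper1 (E : ℝ → ℝ → ℝ → ℝ) (u : ℝ → ℝ) : Prop :=
  ∀ φ : ℝ → ℝ, ContDiff ℝ 1 φ → ∀ x₀ : ℝ, IsLocalMin (u - φ) x₀ →
    0 ≤ E x₀ (u x₀) (deriv φ x₀)

/-- Viscosity solution of `E(x, u(x), u'(x)) = 0` on `ℝ`. -/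
def ViscSol1 (E : ℝ → ℝ → ℝ → ℝ) (u : ℝ → ℝ) : Prop :=
  ViscSub1 E u ∧ ViscSuper1 E u

/-- The kinetic energy `F : F(p) = p` on `[0,1]`, `F(p) = 1` on `[1,2]`, `F(p) = p - 1` for `p ≥ 2`. -/
def Fk (p : ℝ) : ℝ := if p ≤ 1 then p else if p ≤ 2 then 1 else p - 1

/-- The 1-periodic potential: `V(x) = x` on `[0,s]`, `V(x) = 2s - x` on `[s,2s]`, `V(x) = 0`
on `[2s,1]`. -/
def Vs (s x : ℝ) : ℝ :=
  if Int.fract x ≤ s then Int.fract x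
  else if Int.fract x ≤ 2 * s then 2 * s - Int.fract x
  else 0

/- ## Fk lemmas -/

lemma Fk_of_le_one {q : ℝ} (h : q ≤ 1) : Fk q = q := by simp [Fk, h]

lemma Fk_eq_one {q : ℝ} (h1 : 1 ≤ q) (h2 : q ≤ 2) : Fk q = 1 := by
  unfold Fk; split_ifs <;> linarith

lemma Fk_of_two_le {q : ℝ} (h : 2 ≤ q) : Fk q = q - 1 := by
  unfold Fk; split_ifs <;> linarith

lemma Fk_le_one {q : ℝ} (h : q ≤ 2) : Fk q ≤ 1 := by
  unfold Fk; split_ifs <;> linarith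

lemma Fk_ge_one {q : ℝ} (h : 1 ≤ q) : 1 ≤ Fk q := by
  unfold Fk; split_ifs <;> linarith

lemma Fk_le {q t : ℝ} (h : q ≤ 2 + t) (ht : 0 ≤ t) : Fk q ≤ 1 + t := by
  unfold Fk; split_ifs <;> linarith

/- ## Vs lemmas -/

section VsLemmas
variable {s : ℝ} (hs : 0 < s) (hs' : s ≤ 1 / 5)

lemma Vs_nonneg (x : ℝ) : 0 ≤ Vs s x := by
  unfold Vs; have := Int.fract_nonneg x
  split_ifs <;> linarith

include hs in
lemma Vs_le_s (x : ℝ) : Vs s x ≤ s := by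
  unfold Vs; split_ifs <;> linarith

include hs in
lemma Vs_of_ge (x : ℝ) (h : 2 * s ≤ Int.fract x) : Vs s x = 0 := by
  unfold Vs; split_ifs <;> linarith

lemma Vs_tent (x : ℝ) (h : Int.fract x ≤ 2 * s) : Vs s x = s - |Int.fract x - s| := by
  unfold Vs
  rcases le_or_gt (Int.fract x) s with h1 | h1
  · rw [if_pos h1, abs_of_nonpos (by linarith)]; ring
  · rw [if_neg (by linarith), if_pos h, abs_of_nonneg (by linarith)]; ring

include hs hs' in
lemma Vs_lipschitz (x y : ℝ) : |Vs s x - Vs s y| ≤ |x - y| := by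
  -- wlog x ≤ y
  wlog hxy : x ≤ y generalizing x y
  · rw [abs_sub_comm, abs_sub_comm x y]; exact this y x (by linarith)
  have hxyabs : |x - y| = y - x := by rw [abs_sub_comm, abs_of_nonneg (by linarith)]
  rw [hxyabs]
  rcases le_or_gt s (y - x) with hbig | hsmall
  · have h1 := Vs_nonneg (s := s) x
    have h2 := Vs_nonneg (s := s) y
    have h3 := Vs_le_s (s := s) hs x
    have h4 := Vs_le_s (s := s) hs y
    rw [abs_sub_le_iff]; constructor <;> linarith
  · have hfl : (⌊x⌋ : ℤ) ≤ ⌊y⌋ := Int.floor_le_floor hxy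
    have hfu : (⌊y⌋ : ℤ) ≤ ⌊x⌋ + 1 := by
      have : y < x + 1 := by linarith
      calc (⌊y⌋ : ℤ) ≤ ⌊x + 1⌋ := Int.floor_le_floor this.le
        _ = ⌊x⌋ + 1 := by rw [Int.floor_add_one]
    rcases eq_or_lt_of_le hfl with heq | hlt
    · -- same floor
      have hfr : Int.fract y - Int.fract x = y - x := by
        unfold Int.fract; rw [← heq]; ring
      have h0x := Int.fract_nonneg x
      have h0y := Int.fract_nonneg y
      have h1x := Int.fract_lt_one x
      have h1y := Int.fract_lt_one y
      unfold Vs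
      rw [abs_sub_le_iff]
      split_ifs <;> constructor <;> linarith
    · -- floor y = floor x + 1
      have hfy : (⌊y⌋ : ℤ) = ⌊x⌋ + 1 := le_antisymm hfu hlt
      have hx2s : 2 * s ≤ Int.fract x := by
        have h1 : Int.fract x = x - ⌊x⌋ := rfl
        have h2 : (⌊x⌋ : ℝ) = (⌊y⌋ : ℝ) - 1 := by
          have : ((⌊y⌋ : ℤ) : ℝ) = ((⌊x⌋ : ℤ) : ℝ) + 1 := by exact_mod_cast hfy
          linarith
      -- fract x = x - ⌊y⌋ + 1 ≥ x - y + 1 > 1 - s ≥ 2s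
        have h3 : (⌊y⌋ : ℝ) ≤ y := Int.floor_le y
        rw [h1, h2]
        linarith
      have hyx : Int.fract y ≤ y - x := by
        have h1 : Int.fract y = y - ⌊y⌋ := rfl
        have h2 : x < (⌊y⌋ : ℝ) := by
          have h3 : x < (⌊x⌋ : ℝ) + 1 := Int.lt_floor_add_one x
          have : ((⌊y⌋ : ℤ) : ℝ) = ((⌊x⌋ : ℤ) : ℝ) + 1 := by exact_mod_cast hfy
          linarith
        rw [h1]; linarith
      have hys : Int.fract y ≤ s := by linarith
      have hVx : Vs s x = 0 := Vs_of_ge hs x hx2s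
      have hVy : Vs s y = Int.fract y := by unfold Vs; rw [if_pos hys]
      rw [hVx, hVy, abs_sub_le_iff]
      have := Int.fract_nonneg y
      constructor <;> linarith

end VsLemmas

/- ## One-sided test-derivative lemmas -/

section TestLemmas
variable {u φ : ℝ → ℝ} {x₀ d a : ℝ}

lemma slope_tendsto_right (hφ : HasDerivAt φ d x₀) :
    Tendsto (slope φ x₀) (𝓝[>] x₀) (𝓝 d) :=
  (hasDerivAt_iff_tendsto_slope.1 hφ).mono_left
    (nhdsWithin_mono _ fun x hx => ne_of_gt hx)

lemma slope_tendsto_left (hφ : HasDerivAt φ d x₀) :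
    Tendsto (slope φ x₀) (𝓝[<] x₀) (𝓝 d) :=
  (hasDerivAt_iff_tendsto_slope.1 hφ).mono_left
    (nhdsWithin_mono _ fun x hx => ne_of_lt hx)

lemma aux_tendsto_lin (c : ℝ) (l : Filter ℝ) (hl : l ≤ 𝓝 x₀) :
    Tendsto (fun x : ℝ => c + (x - x₀)) l (𝓝 c) := by
  have : Tendsto (fun x : ℝ => c + (x - x₀)) (𝓝 x₀) (𝓝 (c + (x₀ - x₀))) :=
    (continuous_const.add (continuous_id.sub continuous_const)).tendsto x₀
  simpa using this.mono_left hl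

lemma aux_tendsto_lin' (c : ℝ) (l : Filter ℝ) (hl : l ≤ 𝓝 x₀) :
    Tendsto (fun x : ℝ => c - (x - x₀)) l (𝓝 c) := by
  have : Tendsto (fun x : ℝ => c - (x - x₀)) (𝓝 x₀) (𝓝 (c - (x₀ - x₀))) :=
    (continuous_const.sub (continuous_id.sub continuous_const)).tendsto x₀
  simpa using this.mono_left hl

/-- At a local max of `u - φ`, a right lower support slope `a` forces `a ≤ φ'`. -/
lemma test_max_right (hφ : HasDerivAt φ d x₀) (hmax : IsLocalMax (u - φ) x₀)
    (h : ∀ᶠ x in 𝓝[>] x₀, u x₀ + a * (x - x₀) - (x - x₀) ^ 2 ≤ u x) : a ≤ d := by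
  have hmax' : ∀ᶠ x in 𝓝[>] x₀, (u - φ) x ≤ (u - φ) x₀ :=
    (hmax.filter_mono nhdsWithin_le_nhds)
  have hev : ∀ᶠ x in 𝓝[>] x₀, a - (x - x₀) ≤ slope φ x₀ x := by
    filter_upwards [h, hmax', self_mem_nhdsWithin] with x hx hx2 (hx3 : x₀ < x)
    have hpos : 0 < x - x₀ := by linarith
    have h1 : φ x - φ x₀ ≥ a * (x - x₀) - (x - x₀) ^ 2 := by
      have := hx2; simp only [Pi.sub_apply] at this; linarith
    rw [slope_def_field, le_div_iff₀ hpos]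
    nlinarith
  exact le_of_tendsto_of_tendsto (aux_tendsto_lin' a _ nhdsWithin_le_nhds)
    (slope_tendsto_right hφ) hev

/-- At a local max of `u - φ`, a left lower support slope `b` forces `φ' ≤ b`. -/
lemma test_max_left (hφ : HasDerivAt φ d x₀) (hmax : IsLocalMax (u - φ) x₀)
    (h : ∀ᶠ x in 𝓝[<] x₀, u x₀ + a * (x - x₀) - (x - x₀) ^ 2 ≤ u x) : d ≤ a := by
  have hmax' : ∀ᶠ x in 𝓝[<] x₀, (u - φ) x ≤ (u - φ) x₀ :=
    (hmax.filter_mono nhdsWithin_le_nhds)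
  have hev : ∀ᶠ x in 𝓝[<] x₀, slope φ x₀ x ≤ a - (x - x₀) := by
    filter_upwards [h, hmax', self_mem_nhdsWithin] with x hx hx2 (hx3 : x < x₀)
    have hneg : x - x₀ < 0 := by linarith
    have h1 : φ x - φ x₀ ≥ a * (x - x₀) - (x - x₀) ^ 2 := by
      have := hx2; simp only [Pi.sub_apply] at this; linarith
    rw [slope_def_field, div_le_iff_of_neg hneg]
    nlinarith
  exact le_of_tendsto_of_tendsto (slope_tendsto_left hφ)
    (aux_tendsto_lin' a _ nhdsWithin_le_nhds) hev

/-- At a local min of `u - φ`, a right upper support slope `a` forces `φ' ≤ a`. -/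
lemma test_min_right (hφ : HasDerivAt φ d x₀) (hmin : IsLocalMin (u - φ) x₀)
    (h : ∀ᶠ x in 𝓝[>] x₀, u x ≤ u x₀ + a * (x - x₀) + (x - x₀) ^ 2) : d ≤ a := by
  have hmin' : ∀ᶠ x in 𝓝[>] x₀, (u - φ) x₀ ≤ (u - φ) x :=
    (hmin.filter_mono nhdsWithin_le_nhds)
  have hev : ∀ᶠ x in 𝓝[>] x₀, slope φ x₀ x ≤ a + (x - x₀) := by
    filter_upwards [h, hmin', self_mem_nhdsWithin] with x hx hx2 (hx3 : x₀ < x)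
    have hpos : 0 < x - x₀ := by linarith
    have h1 : φ x - φ x₀ ≤ a * (x - x₀) + (x - x₀) ^ 2 := by
      have := hx2; simp only [Pi.sub_apply] at this; linarith
    rw [slope_def_field, div_le_iff₀ hpos]
    nlinarith
  exact le_of_tendsto_of_tendsto (slope_tendsto_right hφ)
    (aux_tendsto_lin a _ nhdsWithin_le_nhds) hev

/-- At a local min of `u - φ`, a left upper support slope `b` forces `b ≤ φ'`. -/
lemma test_min_left (hφ : HasDerivAt φ d x₀) (hmin : IsLocalMin (u - φ) x₀)
    (h : ∀ᶠ x in 𝓝[<] x₀, u x ≤ u x₀ + a * (x - x₀) + (x - x₀) ^ 2) : a ≤ d := by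
  have hmin' : ∀ᶠ x in 𝓝[<] x₀, (u - φ) x₀ ≤ (u - φ) x :=
    (hmin.filter_mono nhdsWithin_le_nhds)
  have hev : ∀ᶠ x in 𝓝[<] x₀, a + (x - x₀) ≤ slope φ x₀ x := by
    filter_upwards [h, hmin', self_mem_nhdsWithin] with x hx hx2 (hx3 : x < x₀)
    have hneg : x - x₀ < 0 := by linarith
    have h1 : φ x - φ x₀ ≤ a * (x - x₀) + (x - x₀) ^ 2 := by
      have := hx2; simp only [Pi.sub_apply] at this; linarith
    rw [slope_def_field, le_div_iff_of_neg hneg]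
    nlinarith
  exact le_of_tendsto_of_tendsto (aux_tendsto_lin a _ nhdsWithin_le_nhds)
    (slope_tendsto_left hφ) hev

end TestLemmas

/- ## The limit solution u0 -/

def gU (s t : ℝ) : ℝ := t/2 + s*t - s^2/2 + (s - t)*|s - t|/2

def x2c (s : ℝ) : ℝ := 4*s + 2*s^2

def U0 (s y : ℝ) : ℝ := if y ≤ 2*s then gU s y else if y ≤ x2c s then (x2c s - y)/2 else 0

def u0f (s x : ℝ) : ℝ := U0 s (Int.fract x)

lemma absq_taylor (A B : ℝ) : abs (A * |A| - B * |B| - 2 * |B| * (A - B)) ≤ 2 * (A - B)^2 := by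
  rcases le_or_gt 0 A with hA | hA <;> rcases le_or_gt 0 B with hB | hB <;>
    rw [abs_le] <;> constructor <;>
    first
    | (rw [abs_of_nonneg hA, abs_of_nonneg hB]; nlinarith)
    | (rw [abs_of_nonneg hA, abs_of_neg hB]; nlinarith)
    | (rw [abs_of_neg hA, abs_of_nonneg hB]; nlinarith)
    | (rw [abs_of_neg hA, abs_of_neg hB]; nlinarith)

lemma gU_taylor (s y t : ℝ) :
    |gU s t - gU s y - (1/2 + s - |s - y|) * (t - y)| ≤ (t - y)^2 := by
  have key := absq_taylor (s - t) (s - y)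
  have h1 : gU s t - gU s y - (1/2 + s - |s - y|) * (t - y)
      = ((s - t) * |s - t| - (s - y) * |s - y| - 2 * |s - y| * ((s - t) - (s - y))) / 2 := by
    unfold gU; ring
  rw [h1, abs_div, abs_of_nonneg (by norm_num : (0:ℝ) ≤ 2)]
  have h3 := absq_taylor (s - t) (s - y)
  have h4 : ((s-t)-(s-y))^2 = (t - y)^2 := by ring
  rw [h4] at h3
  linarith [h3]

lemma gU_zero {s : ℝ} (hs : 0 ≤ s) : gU s 0 = 0 := by
  unfold gU
  rw [abs_of_nonneg (by linarith)]; ring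

lemma gU_eq_small {s y : ℝ} (h : y ≤ s) : gU s y = y/2 + y^2/2 := by
  unfold gU; rw [abs_of_nonneg (by linarith)]; ring

lemma gU_eq_big {s y : ℝ} (h : s ≤ y) : gU s y = y/2 + s*y - s^2/2 - (y-s)^2/2 := by
  unfold gU; rw [abs_of_nonpos (by linarith)]; ring

lemma gU_2s (s : ℝ) (hs : 0 < s) : gU s (2*s) = s + s^2 := by
  rw [gU_eq_big (by linarith)]; ring

lemma gU_nonneg {s y : ℝ} (hs : 0 < s) (h0 : 0 ≤ y) (h2 : y ≤ 2*s) : 0 ≤ gU s y := by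
  rcases le_or_gt y s with h | h
  · rw [gU_eq_small h]; nlinarith
  · rw [gU_eq_big h.le]; nlinarith

lemma gU_le_peak {s y : ℝ} (hs : 0 < s) (h0 : 0 ≤ y) (h2 : y ≤ 2*s) : gU s y ≤ s + s^2 := by
  rcases le_or_gt y s with h | h
  · rw [gU_eq_small h]; nlinarith
  · rw [gU_eq_big h.le]; nlinarith

lemma gU_cont (s : ℝ) : Continuous (gU s) := by
  unfold gU
  have habs : Continuous fun t : ℝ => |s - t| :=
    continuous_abs.comp (continuous_const.sub continuous_id)
  fun_prop

lemma x2c_lt_one {s : ℝ} (hs : 0 < s) (hs' : s ≤ 1/5) : x2c s < 1 := by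
  unfold x2c; nlinarith

lemma two_s_lt_x2c {s : ℝ} (hs : 0 < s) : 2*s < x2c s := by unfold x2c; nlinarith

lemma U0_cont (s : ℝ) (hs : 0 < s) : Continuous (U0 s) := by
  unfold U0
  apply Continuous.if_le
  · exact gU_cont s
  · apply Continuous.if_le
    · fun_prop
    · exact continuous_const
    · fun_prop
    · exact continuous_const
    · intro y hy; rw [hy]; simp
  · exact continuous_id
  · exact continuous_const
  · intro y hy
    rw [hy, gU_2s s hs, if_pos (two_s_lt_x2c hs).le]
    unfold x2c; ring

lemma U0_one {s : ℝ} (hs : 0 < s) (hs' : s ≤ 1/5) : U0 s 1 = 0 := by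
  unfold U0
  rw [if_neg (by nlinarith), if_neg (by push_neg; exact x2c_lt_one hs hs')]

lemma U0_zero {s : ℝ} (hs : 0 < s) : U0 s 0 = 0 := by
  unfold U0; rw [if_pos (by linarith), gU_zero hs.le]

lemma u0f_cont {s : ℝ} (hs : 0 < s) (hs' : s ≤ 1/5) : Continuous (u0f s) := by
  have : Continuous (U0 s ∘ Int.fract) :=
    ContinuousOn.comp_fract'' ((U0_cont s hs).continuousOn) (by rw [U0_zero hs, U0_one hs hs'])
  exact this

lemma u0f_periodic (s : ℝ) : Function.Periodic (u0f s) 1 := by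
  intro x; unfold u0f
  rw [show x + 1 = x + (1:ℤ) by norm_num, Int.fract_add_intCast]

lemma u0f_nonneg {s : ℝ} (hs : 0 < s) (hs' : s ≤ 1/5) (x : ℝ) : 0 ≤ u0f s x := by
  unfold u0f U0
  have h0 := Int.fract_nonneg x
  have h1 := (Int.fract_lt_one x).le
  split_ifs with h2 h3
  · exact gU_nonneg hs h0 h2
  · linarith
  · exact le_refl 0

lemma u0f_le_one {s : ℝ} (hs : 0 < s) (hs' : s ≤ 1/5) (x : ℝ) : u0f s x ≤ 1 := by
  unfold u0f U0
  have h0 := Int.fract_nonneg x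
  split_ifs with h2 h3
  · have := gU_le_peak hs h0 h2; nlinarith
  · unfold x2c at *; push_neg at h2; nlinarith
  · norm_num

/- ## Local representations of u0f -/

lemma fract_eq_of_mem {n : ℤ} {x : ℝ} (h1 : (n:ℝ) ≤ x) (h2 : x < n + 1) :
    Int.fract x = x - n := by
  have := Int.fract_sub_intCast x n
  rw [Int.fract_eq_self.2 ⟨by linarith, by linarith⟩] at this
  linarith

section U0Repr
variable {s : ℝ} (hs : 0 < s) (hs' : s ≤ 1/5) (x₀ : ℝ)

-- notation
local notation "n₀" => (⌊x₀⌋ : ℝ)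
local notation "y₀" => Int.fract x₀

lemma x0_eq : x₀ = n₀ + y₀ := by unfold Int.fract; ring

include hs hs' in
/-- Taylor support of u0f on the rising region, valid on (n, n+2s]. -/
lemma u0_rise_left (hy1 : 0 < y₀) (hy2 : y₀ ≤ 2*s) :
    ∀ᶠ x in 𝓝[<] x₀, |u0f s x - u0f s x₀ - (1/2 + s - |s - y₀|) * (x - x₀)| ≤ (x - x₀)^2 := by
  have hmem : Ioo n₀ x₀ ∈ 𝓝[<] x₀ :=
    Ioo_mem_nhdsLT_of_mem ⟨by unfold Int.fract at hy1; linarith, le_refl _⟩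
  filter_upwards [hmem] with x hx
  have hfx : Int.fract x = x - ⌊x₀⌋ := by
    apply fract_eq_of_mem hx.1.le
    have h1 : x₀ < n₀ + 1 := by
      have := Int.fract_lt_one x₀; unfold Int.fract at this; linarith
    linarith [hx.2]
  have hle : Int.fract x ≤ 2*s := by
    rw [hfx]
    have : x < x₀ := hx.2
    unfold Int.fract at hy2; linarith
  have hux : u0f s x = gU s (Int.fract x) := by unfold u0f U0; rw [if_pos hle]
  have hux0 : u0f s x₀ = gU s y₀ := by unfold u0f U0; rw [if_pos hy2]
  rw [hux, hux0, hfx]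
  have := gU_taylor s y₀ (x - ⌊x₀⌋)
  have harg : x - n₀ - y₀ = x - x₀ := by unfold Int.fract; ring
  rw [harg] at this
  exact this

include hs hs' in
lemma u0_rise_right (hy2 : y₀ < 2*s) :
    ∀ᶠ x in 𝓝[>] x₀, |u0f s x - u0f s x₀ - (1/2 + s - |s - y₀|) * (x - x₀)| ≤ (x - x₀)^2 := by
  have hmem : Ioo x₀ (n₀ + 2*s) ∈ 𝓝[>] x₀ :=
    Ioo_mem_nhdsGT_of_mem ⟨le_refl _, by unfold Int.fract at hy2; linarith⟩
  filter_upwards [hmem] with x hx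
  have hfx : Int.fract x = x - ⌊x₀⌋ := by
    apply fract_eq_of_mem
    · have h0 := Int.fract_nonneg x₀; unfold Int.fract at h0; linarith [hx.1]
    · have : x < n₀ + 2*s := hx.2
      linarith
  have hle : Int.fract x ≤ 2*s := by rw [hfx]; linarith [hx.2]
  have hux : u0f s x = gU s (Int.fract x) := by unfold u0f U0; rw [if_pos hle]
  have hux0 : u0f s x₀ = gU s y₀ := by unfold u0f U0; rw [if_pos hy2.le]
  rw [hux, hux0, hfx]
  have := gU_taylor s y₀ (x - ⌊x₀⌋)
  have harg : x - n₀ - y₀ = x - x₀ := by unfold Int.fract; ring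
  rw [harg] at this
  exact this

include hs hs' in
/-- Descending linear representation, valid on [n+2s, n+x2c). -/
lemma u0_desc_right (hy1 : 2*s ≤ y₀) (hy2 : y₀ < x2c s) :
    ∀ᶠ x in 𝓝[>] x₀, u0f s x = u0f s x₀ + (-(1/2)) * (x - x₀) := by
  have hmem : Ioo x₀ (n₀ + x2c s) ∈ 𝓝[>] x₀ :=
    Ioo_mem_nhdsGT_of_mem ⟨le_refl _, by unfold Int.fract at hy2; linarith⟩
  filter_upwards [hmem] with x hx
  have hx2c1 := x2c_lt_one hs hs'
  have hfx : Int.fract x = x - ⌊x₀⌋ := by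
    apply fract_eq_of_mem
    · have h0 := Int.fract_nonneg x₀; unfold Int.fract at h0; linarith [hx.1]
    · linarith [hx.2]
  have h2s : 2*s < Int.fract x := by
    rw [hfx]; unfold Int.fract at hy1; linarith [hx.1]
  have hlex2 : Int.fract x ≤ x2c s := by rw [hfx]; linarith [hx.2]
  have hux : u0f s x = (x2c s - Int.fract x)/2 := by
    unfold u0f U0; rw [if_neg (by linarith), if_pos hlex2]
  have hux0 : u0f s x₀ = (x2c s - y₀)/2 := by
    unfold u0f U0
    rcases eq_or_lt_of_le hy1 with he | hl
    · rw [if_pos he.ge]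
      rw [← he, gU_2s s hs]; unfold x2c; ring
    · rw [if_neg (by linarith), if_pos hy2.le]
  rw [hux, hux0, hfx]
  unfold Int.fract; ring

include hs hs' in
/-- Descending linear representation from the left, valid on (n+2s, n+x2c]. -/
lemma u0_desc_left (hy1 : 2*s < y₀) (hy2 : y₀ ≤ x2c s) :
    ∀ᶠ x in 𝓝[<] x₀, u0f s x = u0f s x₀ + (-(1/2)) * (x - x₀) := by
  have hmem : Ioo (n₀ + 2*s) x₀ ∈ 𝓝[<] x₀ :=
    Ioo_mem_nhdsLT_of_mem ⟨by unfold Int.fract at hy1; linarith, le_refl _⟩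
  filter_upwards [hmem] with x hx
  have hx2c1 := x2c_lt_one hs hs'
  have hfx : Int.fract x = x - ⌊x₀⌋ := by
    apply fract_eq_of_mem
    · have : n₀ + 2*s < x := hx.1; linarith
    · have h1 := Int.fract_lt_one x₀; unfold Int.fract at h1; linarith [hx.2]
  have h2s : 2*s < Int.fract x := by rw [hfx]; linarith [hx.1]
  have hlex2 : Int.fract x ≤ x2c s := by
    rw [hfx]; unfold Int.fract at hy2; linarith [hx.2]
  have hux : u0f s x = (x2c s - Int.fract x)/2 := by
    unfold u0f U0; rw [if_neg (by linarith), if_pos hlex2]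
  have hux0 : u0f s x₀ = (x2c s - y₀)/2 := by
    unfold u0f U0; rw [if_neg (by linarith), if_pos hy2]
  rw [hux, hux0, hfx]
  unfold Int.fract; ring

include hs hs' in
/-- Flat representation on the right, valid for fract x₀ ∈ [x2c, 1). -/
lemma u0_flat_right (hy1 : x2c s ≤ y₀) :
    ∀ᶠ x in 𝓝[>] x₀, u0f s x = u0f s x₀ + 0 * (x - x₀) := by
  have hmem : Ioo x₀ (n₀ + 1) ∈ 𝓝[>] x₀ :=
    Ioo_mem_nhdsGT_of_mem ⟨le_refl _,
      by have := Int.fract_lt_one x₀; unfold Int.fract at this; linarith⟩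
  filter_upwards [hmem] with x hx
  have hx2c0 : 0 < x2c s := by unfold x2c; nlinarith
  have hfx : Int.fract x = x - ⌊x₀⌋ := by
    apply fract_eq_of_mem
    · have h0 := Int.fract_nonneg x₀; unfold Int.fract at h0; linarith [hx.1]
    · linarith [hx.2]
  have hgt : x2c s < Int.fract x := by
    rw [hfx]; unfold Int.fract at hy1; linarith [hx.1]
  have hux : u0f s x = 0 := by
    unfold u0f U0; rw [if_neg (by nlinarith [two_s_lt_x2c hs]), if_neg (by linarith)]
  have hux0 : u0f s x₀ = 0 := by
    unfold u0f U0
    rcases eq_or_lt_of_le hy1 with he | hl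
    · rw [if_neg (by nlinarith [two_s_lt_x2c hs]), if_pos he.ge, ← he]; ring
    · rw [if_neg (by nlinarith [two_s_lt_x2c hs]), if_neg (by linarith)]
  rw [hux, hux0]; ring

include hs hs' in
/-- Flat representation on the left for fract x₀ ∈ (x2c, 1). -/
lemma u0_flat_left (hy1 : x2c s < y₀) :
    ∀ᶠ x in 𝓝[<] x₀, u0f s x = u0f s x₀ + 0 * (x - x₀) := by
  have hmem : Ioo (n₀ + x2c s) x₀ ∈ 𝓝[<] x₀ :=
    Ioo_mem_nhdsLT_of_mem ⟨by unfold Int.fract at hy1; linarith, le_refl _⟩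
  filter_upwards [hmem] with x hx
  have hx2c0 : 0 < x2c s := by unfold x2c; nlinarith
  have hfx : Int.fract x = x - ⌊x₀⌋ := by
    apply fract_eq_of_mem
    · have : n₀ + x2c s < x := hx.1; linarith
    · have h1 := Int.fract_lt_one x₀; unfold Int.fract at h1; linarith [hx.2]
  have hgt : x2c s < Int.fract x := by rw [hfx]; linarith [hx.1]
  have hux : u0f s x = 0 := by
    unfold u0f U0; rw [if_neg (by nlinarith [two_s_lt_x2c hs]), if_neg (by linarith)]
  have hux0 : u0f s x₀ = 0 := by
    unfold u0f U0; rw [if_neg (by nlinarith [two_s_lt_x2c hs]), if_neg (by linarith)]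
  rw [hux, hux0]; ring

include hs hs' in
/-- Flat representation on the left at an integer point (fract x₀ = 0). -/
lemma u0_flat_left_zero (hy0 : y₀ = 0) :
    ∀ᶠ x in 𝓝[<] x₀, u0f s x = u0f s x₀ + 0 * (x - x₀) := by
  have hx2c1 := x2c_lt_one hs hs'
  have hx0n : x₀ = n₀ := by unfold Int.fract at hy0; linarith
  have hx2c0 : 0 < x2c s := by unfold x2c; nlinarith
  have hmem : Ioo (n₀ - 1 + x2c s) x₀ ∈ 𝓝[<] x₀ :=
    Ioo_mem_nhdsLT_of_mem ⟨by linarith, le_refl _⟩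
  filter_upwards [hmem] with x hx
  have hx1 : n₀ - 1 + x2c s < x := hx.1
  have hx2 : x < x₀ := hx.2
  have hfx : Int.fract x = x - (n₀ - 1) := by
    have hlow : (0:ℝ) ≤ x - (n₀ - 1) := by linarith
    have hhigh : x - (n₀ - 1) < 1 := by linarith
    have h := Int.fract_sub_intCast x (⌊x₀⌋ - 1)
    push_cast at h
    rw [Int.fract_eq_self.2 ⟨hlow, hhigh⟩] at h
    linarith [h]
  have hgt : x2c s < Int.fract x := by rw [hfx]; linarith
  have hux : u0f s x = 0 := by
    unfold u0f U0; rw [if_neg (by nlinarith [two_s_lt_x2c hs]), if_neg (by linarith)]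
  have hux0 : u0f s x₀ = 0 := by
    unfold u0f U0; rw [hy0, if_pos (by linarith), gU_zero hs.le]
  rw [hux, hux0]; ring

end U0Repr

/- ## Converters -/

section Conv
variable {u : ℝ → ℝ} {x₀ a : ℝ} {l : Filter ℝ}

lemma ev_abs_to_lower (h : ∀ᶠ x in l, |u x - u x₀ - a * (x - x₀)| ≤ (x - x₀)^2) :
    ∀ᶠ x in l, u x₀ + a * (x - x₀) - (x - x₀)^2 ≤ u x := by
  filter_upwards [h] with x hx
  have := abs_le.1 hx
  linarith [this.1]

lemma ev_abs_to_upper (h : ∀ᶠ x in l, |u x - u x₀ - a * (x - x₀)| ≤ (x - x₀)^2) :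
    ∀ᶠ x in l, u x ≤ u x₀ + a * (x - x₀) + (x - x₀)^2 := by
  filter_upwards [h] with x hx
  have := abs_le.1 hx
  linarith [this.2]

lemma ev_eq_to_lower (h : ∀ᶠ x in l, u x = u x₀ + a * (x - x₀)) :
    ∀ᶠ x in l, u x₀ + a * (x - x₀) - (x - x₀)^2 ≤ u x := by
  filter_upwards [h] with x hx
  nlinarith [sq_nonneg (x - x₀)]

lemma ev_eq_to_upper (h : ∀ᶠ x in l, u x = u x₀ + a * (x - x₀)) :
    ∀ᶠ x in l, u x ≤ u x₀ + a * (x - x₀) + (x - x₀)^2 := by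
  filter_upwards [h] with x hx
  nlinarith [sq_nonneg (x - x₀)]

end Conv

/- ## u0f is a viscosity solution of the limit equation -/

section U0Visc
variable {s : ℝ} (hs : 0 < s) (hs' : s ≤ 1/5)

include hs hs' in
lemma u0_viscSub : ViscSub1 (fun x _ p => Fk |3 / 2 + p| - Vs s x - 1) (u0f s) := by
  intro φ hφ x₀ hmax
  have hd : HasDerivAt φ (deriv φ x₀) x₀ := ((hφ.differentiable one_ne_zero) x₀).hasDerivAt
  show Fk |3 / 2 + deriv φ x₀| - Vs s x₀ - 1 ≤ 0
  set d := deriv φ x₀ with hd_def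
  have hy0 := Int.fract_nonneg x₀
  have hy1 := Int.fract_lt_one x₀
  rcases eq_or_lt_of_le hy0 with hA | hyp
  · -- fract x₀ = 0 : convex kink, no test functions
    have hL := ev_eq_to_lower (u0_flat_left_zero hs hs' x₀ hA.symm)
    have hdle : d ≤ 0 := test_max_left hd hmax hL
    have hR := ev_abs_to_lower (u0_rise_right hs hs' x₀ (by rw [← hA]; linarith))
    have hdge : 1/2 + s - |s - Int.fract x₀| ≤ d := test_max_right hd hmax hR
    rw [← hA, sub_zero, abs_of_nonneg hs.le] at hdge
    exact absurd hdge (by linarith)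
  · rcases lt_trichotomy (Int.fract x₀) (2*s) with hB | hC | hD
    · -- rising region
      have hL := ev_abs_to_lower (u0_rise_left hs hs' x₀ hyp hB.le)
      have hR := ev_abs_to_lower (u0_rise_right hs hs' x₀ hB)
      have h1 : 1/2 + s - |s - Int.fract x₀| ≤ d := test_max_right hd hmax hR
      have h2 : d ≤ 1/2 + s - |s - Int.fract x₀| := test_max_left hd hmax hL
      have hdeq : d = 1/2 + s - |s - Int.fract x₀| := le_antisymm h2 h1
      have habs : |s - Int.fract x₀| ≤ s := by
        rw [abs_le]; constructor <;> linarith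
      have hq : |3/2 + d| = 2 + (s - |s - Int.fract x₀|) := by
        rw [hdeq, abs_of_nonneg (by linarith)]; ring
      have hVs : Vs s x₀ = s - |Int.fract x₀ - s| := Vs_tent x₀ hB.le
      rw [show (3:ℝ)/2 = 3/2 by norm_num] at *
      rw [hq, Fk_of_two_le (by linarith), hVs, abs_sub_comm]
      ring_nf
      linarith
    · -- peak at 2s
      have hL := ev_abs_to_lower (u0_rise_left hs hs' x₀ hyp hC.le)
      have hR := ev_eq_to_lower (u0_desc_right hs hs' x₀ hC.ge (by rw [hC]; exact two_s_lt_x2c hs))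
      have h1 : -(1/2) ≤ d := test_max_right hd hmax hR
      have h2 : d ≤ 1/2 + s - |s - Int.fract x₀| := test_max_left hd hmax hL
      rw [hC, show s - 2*s = -s by ring, abs_neg, abs_of_nonneg hs.le] at h2
      have hVs : Vs s x₀ = s - |Int.fract x₀ - s| := Vs_tent x₀ hC.le
      rw [hC, show 2*s - s = s by ring, abs_of_nonneg hs.le, sub_self] at hVs
      have hq : |3/2 + d| = 3/2 + d := abs_of_nonneg (by linarith)
      rw [show (3:ℝ)/2 = 3/2 by norm_num, hq, Fk_eq_one (by linarith) (by linarith), hVs]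
      linarith
    · rcases lt_trichotomy (Int.fract x₀) (x2c s) with hD1 | hD2 | hD3
      · -- descending region
        have hL := ev_eq_to_lower (u0_desc_left hs hs' x₀ hD hD1.le)
        have hR := ev_eq_to_lower (u0_desc_right hs hs' x₀ hD.le hD1)
        have h1 : -(1/2) ≤ d := test_max_right hd hmax hR
        have h2 : d ≤ -(1/2) := test_max_left hd hmax hL
        have hdeq : d = -(1/2) := le_antisymm h2 h1
        have hVs : Vs s x₀ = 0 := Vs_of_ge hs x₀ hD.le
        rw [hdeq, show |(3:ℝ)/2 + -(1/2)| = 1 by norm_num, Fk_eq_one le_rfl (by norm_num), hVs]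
        norm_num
      · -- kink at x2c : convex, no test functions
        have hL := ev_eq_to_lower (u0_desc_left hs hs' x₀ hD hD2.le)
        have hR := ev_eq_to_lower (u0_flat_right hs hs' x₀ hD2.ge)
        have h1 : (0:ℝ) ≤ d := test_max_right hd hmax hR
        have h2 : d ≤ -(1/2) := test_max_left hd hmax hL
        exact absurd h1 (by linarith)
      · -- flat region
        have hL := ev_eq_to_lower (u0_flat_left hs hs' x₀ hD3)
        have hR := ev_eq_to_lower (u0_flat_right hs hs' x₀ hD3.le)
        have h1 : (0:ℝ) ≤ d := test_max_right hd hmax hR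
        have h2 : d ≤ 0 := test_max_left hd hmax hL
        have hdeq : d = 0 := le_antisymm h2 h1
        have hVs : Vs s x₀ = 0 := Vs_of_ge hs x₀ hD.le
        rw [hdeq, show |(3:ℝ)/2 + 0| = 3/2 by norm_num,
          Fk_eq_one (by norm_num) (by norm_num), hVs]
        norm_num

include hs hs' in
lemma u0_viscSuper : ViscSuper1 (fun x _ p => Fk |3 / 2 + p| - Vs s x - 1) (u0f s) := by
  intro φ hφ x₀ hmin
  have hd : HasDerivAt φ (deriv φ x₀) x₀ := ((hφ.differentiable one_ne_zero) x₀).hasDerivAt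
  show 0 ≤ Fk |3 / 2 + deriv φ x₀| - Vs s x₀ - 1
  set d := deriv φ x₀ with hd_def
  have hy0 := Int.fract_nonneg x₀
  have hy1 := Int.fract_lt_one x₀
  rcases eq_or_lt_of_le hy0 with hA | hyp
  · -- fract x₀ = 0 : convex kink
    have hL := ev_eq_to_upper (u0_flat_left_zero hs hs' x₀ hA.symm)
    have hdge : (0:ℝ) ≤ d := test_min_left hd hmin hL
    have hR := ev_abs_to_upper (u0_rise_right hs hs' x₀ (by rw [← hA]; linarith))
    have hdle : d ≤ 1/2 + s - |s - Int.fract x₀| := test_min_right hd hmin hR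
    rw [← hA, sub_zero, abs_of_nonneg hs.le] at hdle
    have hVs : Vs s x₀ = s - |Int.fract x₀ - s| := Vs_tent x₀ (by rw [← hA]; linarith)
    rw [← hA, zero_sub, abs_neg, abs_of_nonneg hs.le, sub_self] at hVs
    have hq : |3/2 + d| = 3/2 + d := abs_of_nonneg (by linarith)
    rw [show (3:ℝ)/2 = 3/2 by norm_num, hq, Fk_eq_one (by linarith) (by linarith), hVs]
    linarith
  · rcases lt_trichotomy (Int.fract x₀) (2*s) with hB | hC | hD
    · -- rising region
      have hL := ev_abs_to_upper (u0_rise_left hs hs' x₀ hyp hB.le)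
      have hR := ev_abs_to_upper (u0_rise_right hs hs' x₀ hB)
      have h1 : d ≤ 1/2 + s - |s - Int.fract x₀| := test_min_right hd hmin hR
      have h2 : 1/2 + s - |s - Int.fract x₀| ≤ d := test_min_left hd hmin hL
      have hdeq : d = 1/2 + s - |s - Int.fract x₀| := le_antisymm h1 h2
      have habs : |s - Int.fract x₀| ≤ s := by
        rw [abs_le]; constructor <;> linarith
      have hq : |3/2 + d| = 2 + (s - |s - Int.fract x₀|) := by
        rw [hdeq, abs_of_nonneg (by linarith)]; ring
      have hVs : Vs s x₀ = s - |Int.fract x₀ - s| := Vs_tent x₀ hB.le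
      rw [show (3:ℝ)/2 = 3/2 by norm_num, hq, Fk_of_two_le (by linarith), hVs, abs_sub_comm]
      linarith
    · -- peak at 2s : concave kink, no test functions for min
      have hL := ev_abs_to_upper (u0_rise_left hs hs' x₀ hyp hC.le)
      have hR := ev_eq_to_upper (u0_desc_right hs hs' x₀ hC.ge (by rw [hC]; exact two_s_lt_x2c hs))
      have h1 : d ≤ -(1/2) := test_min_right hd hmin hR
      have h2 : 1/2 + s - |s - Int.fract x₀| ≤ d := test_min_left hd hmin hL
      rw [hC, show s - 2*s = -s by ring, abs_neg, abs_of_nonneg hs.le] at h2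
      exact absurd h1 (by linarith)
    · rcases lt_trichotomy (Int.fract x₀) (x2c s) with hD1 | hD2 | hD3
      · -- descending region
        have hL := ev_eq_to_upper (u0_desc_left hs hs' x₀ hD hD1.le)
        have hR := ev_eq_to_upper (u0_desc_right hs hs' x₀ hD.le hD1)
        have h1 : d ≤ -(1/2) := test_min_right hd hmin hR
        have h2 : -(1/2) ≤ d := test_min_left hd hmin hL
        have hdeq : d = -(1/2) := le_antisymm h1 h2
        have hVs : Vs s x₀ = 0 := Vs_of_ge hs x₀ hD.le
        rw [hdeq, show |(3:ℝ)/2 + -(1/2)| = 1 by norm_num, Fk_eq_one le_rfl (by norm_num), hVs]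
        norm_num
      · -- kink at x2c
        have hL := ev_eq_to_upper (u0_desc_left hs hs' x₀ hD hD2.le)
        have hR := ev_eq_to_upper (u0_flat_right hs hs' x₀ hD2.ge)
        have h1 : d ≤ (0:ℝ) := test_min_right hd hmin hR
        have h2 : -(1/2) ≤ d := test_min_left hd hmin hL
        have hVs : Vs s x₀ = 0 := Vs_of_ge hs x₀ hD.le
        have hq : |3/2 + d| = 3/2 + d := abs_of_nonneg (by linarith)
        rw [show (3:ℝ)/2 = 3/2 by norm_num, hq, Fk_eq_one (by linarith) (by linarith), hVs]
        linarith
      · -- flat region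
        have hL := ev_eq_to_upper (u0_flat_left hs hs' x₀ hD3)
        have hR := ev_eq_to_upper (u0_flat_right hs hs' x₀ hD3.le)
        have h1 : d ≤ 0 := test_min_right hd hmin hR
        have h2 : (0:ℝ) ≤ d := test_min_left hd hmin hL
        have hdeq : d = 0 := le_antisymm h1 h2
        have hVs : Vs s x₀ = 0 := Vs_of_ge hs x₀ hD.le
        rw [hdeq, show |(3:ℝ)/2 + 0| = 3/2 by norm_num,
          Fk_eq_one (by norm_num) (by norm_num), hVs]
        norm_num

end U0Visc

/- ## The approximate subsolution wf -/

def pE (s ε : ℝ) : ℝ := 2*s - 2*ε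
def mE (s ε : ℝ) : ℝ := gU s (pE s ε) - ε * pE s ε
def qE (s ε : ℝ) : ℝ := pE s ε + mE s ε / (1/2 + ε)
def Wc (s ε y : ℝ) : ℝ :=
  if y ≤ pE s ε then gU s y - ε*y
  else if y ≤ qE s ε then mE s ε - (1/2+ε)*(y - pE s ε)
  else 0
def wf (s ε x : ℝ) : ℝ := Wc s ε (Int.fract x)

section WLemmas
variable {s ε : ℝ} (hs : 0 < s) (hs' : s ≤ 1/5) (hε : 0 < ε) (hε4 : ε ≤ s/4)

include hs hε4 in
lemma pE_ge_s : s ≤ pE s ε := by unfold pE; linarith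

include hε in
lemma pE_lt_2s : pE s ε < 2*s := by unfold pE; linarith

include hs hε4 in
lemma pE_pos : 0 < pE s ε := by unfold pE; linarith

include hs hε4 in
lemma mE_eq : mE s ε = s + s^2 - ε*(1+2*s) := by
  unfold mE
  rw [gU_eq_big (pE_ge_s hs hε4)]
  unfold pE; ring

include hs hs' hε hε4 in
lemma mE_pos : 0 < mE s ε := by rw [mE_eq hs hε4]; nlinarith

include hs hs' hε hε4 in
lemma mE_lt_one : mE s ε < 1 := by rw [mE_eq hs hε4]; nlinarith

include hs hs' hε hε4 in
lemma mE_le_peak : mE s ε ≤ s + s^2 := by rw [mE_eq hs hε4]; nlinarith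

include hs hs' hε hε4 in
lemma qE_gt_pE : pE s ε < qE s ε := by
  unfold qE
  have h1 : 0 < mE s ε / (1/2 + ε) := div_pos (mE_pos hs hs' hε hε4) (by linarith)
  linarith

include hs hs' hε hε4 in
lemma qE_ge_2s : 2*s ≤ qE s ε := by
  unfold qE
  have h1 : mE s ε ≤ mE s ε / (1/2 + ε) := by
    rw [le_div_iff₀ (by linarith)]
    nlinarith [mE_pos hs hs' hε hε4, mE_eq hs hε4]
  have h2 : 2*ε ≤ mE s ε := by rw [mE_eq hs hε4]; nlinarith
  unfold pE; linarith

include hs hs' hε hε4 in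
lemma qE_le : qE s ε ≤ x2c s - 2*ε := by
  unfold qE
  have h1 : mE s ε / (1/2 + ε) ≤ 2 * mE s ε := by
    rw [div_le_iff₀ (by linarith)]
    nlinarith [mE_pos hs hs' hε hε4]
  have h2 := mE_eq hs hε4
  unfold pE x2c; nlinarith

include hs hs' hε hε4 in
lemma qE_lt_one : qE s ε < 1 := by
  have h1 := qE_le hs hs' hε hε4
  have h2 := x2c_lt_one hs hs'
  linarith

include hs hs' hε hε4 in
lemma Wc_qE : Wc s ε (qE s ε) = 0 := by
  unfold Wc
  rw [if_neg (by push_neg; exact qE_gt_pE hs hs' hε hε4), if_pos le_rfl]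
  unfold qE
  field_simp
  ring

include hs hs' hε hε4 in
lemma Wc_cont : Continuous (Wc s ε) := by
  unfold Wc
  apply Continuous.if_le
  · exact (gU_cont s).sub (continuous_const.mul continuous_id)
  · apply Continuous.if_le
    · fun_prop
    · exact continuous_const
    · exact continuous_id
    · exact continuous_const
    · intro y hy
      rw [hy]
      unfold qE; field_simp; ring
  · exact continuous_id
  · exact continuous_const
  · intro y hy
    rw [hy, if_pos (le_of_lt (lt_of_lt_of_le (qE_gt_pE hs hs' hε hε4) le_rfl))]
    unfold mE; ring

include hs hs' hε hε4 in
lemma Wc_zero : Wc s ε 0 = 0 := by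
  unfold Wc
  rw [if_pos (pE_pos hs hε4).le, gU_zero hs.le]; ring

include hs hs' hε hε4 in
lemma Wc_one : Wc s ε 1 = 0 := by
  unfold Wc
  have h1 : pE s ε < 1 := by unfold pE; linarith
  have h2 := qE_lt_one hs hs' hε hε4
  rw [if_neg (by linarith), if_neg (by linarith)]

include hs hs' hε hε4 in
lemma wf_cont : Continuous (wf s ε) := by
  have : Continuous (Wc s ε ∘ Int.fract) :=
    ContinuousOn.comp_fract'' (Wc_cont hs hs' hε hε4).continuousOn
      (by rw [Wc_zero hs hs' hε hε4, Wc_one hs hs' hε hε4])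
  exact this

lemma wf_periodic : Function.Periodic (wf s ε) 1 := by
  intro x; unfold wf
  rw [show x + 1 = x + (1:ℤ) by norm_num, Int.fract_add_intCast]

include hs hs' hε hε4 in
lemma Wc_nonneg {y : ℝ} (h0 : 0 ≤ y) (h1 : y ≤ qE s ε) : 0 ≤ Wc s ε y := by
  unfold Wc
  split_ifs with h2 h3
  · have h2s : y ≤ 2*s := by linarith [pE_lt_2s hε (s := s)]
    have := gU_nonneg hs h0 h2s
    rcases le_or_gt y s with hys | hys
    · rw [gU_eq_small hys]; nlinarith
    · rw [gU_eq_big hys.le]; nlinarith [pE_ge_s hs hε4, pE_lt_2s hε (s := s)]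
  · -- on descending branch: value ≥ value at qE = 0
    have key : mE s ε - (1/2+ε)*(y - pE s ε)
        = (mE s ε - (1/2+ε)*(qE s ε - pE s ε)) + (1/2+ε)*(qE s ε - y) := by ring
    have h4 : mE s ε - (1/2+ε)*(qE s ε - pE s ε) = 0 := by
      unfold qE; field_simp; ring
    have h5 : (0:ℝ) ≤ (1/2+ε)*(qE s ε - y) := mul_nonneg (by linarith) (by linarith)
    linarith [key, h4, h5]

include hs hs' hε hε4 in
lemma Wc_le_one {y : ℝ} (h0 : 0 ≤ y) : Wc s ε y ≤ 1 := by
  unfold Wc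
  split_ifs with h2 h3
  · have h2s : y ≤ 2*s := by linarith [pE_lt_2s hε (s := s)]
    have := gU_le_peak hs h0 h2s
    nlinarith
  · push_neg at h2
    have := mE_lt_one hs hs' hε hε4
    nlinarith
  · norm_num

end WLemmas

/- ## Local representations of wf -/

section WRepr
variable {s ε : ℝ} (hs : 0 < s) (hs' : s ≤ 1/5) (hε : 0 < ε) (hε4 : ε ≤ s/4) (x₀ : ℝ)

local notation "n₀" => (⌊x₀⌋ : ℝ)
local notation "y₀" => Int.fract x₀

include hs hs' hε hε4 in
lemma w_rise_left (hy1 : 0 < y₀) (hy2 : y₀ ≤ pE s ε) :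
    ∀ᶠ x in 𝓝[<] x₀,
      |wf s ε x - wf s ε x₀ - (1/2 + s - |s - y₀| - ε) * (x - x₀)| ≤ (x - x₀)^2 := by
  have hmem : Ioo n₀ x₀ ∈ 𝓝[<] x₀ :=
    Ioo_mem_nhdsLT_of_mem ⟨by unfold Int.fract at hy1; linarith, le_refl _⟩
  filter_upwards [hmem] with x hx
  have hfx : Int.fract x = x - ⌊x₀⌋ := by
    apply fract_eq_of_mem hx.1.le
    have h1 := Int.fract_lt_one x₀; unfold Int.fract at h1; linarith [hx.2]
  have hle : Int.fract x ≤ pE s ε := by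
    rw [hfx]; have : x < x₀ := hx.2; unfold Int.fract at hy2; linarith
  have hux : wf s ε x = gU s (Int.fract x) - ε * Int.fract x := by
    unfold wf Wc; rw [if_pos hle]
  have hux0 : wf s ε x₀ = gU s y₀ - ε * y₀ := by unfold wf Wc; rw [if_pos hy2]
  rw [hux, hux0, hfx]
  have h := gU_taylor s y₀ (x - ⌊x₀⌋)
  have harg : x - n₀ - y₀ = x - x₀ := by unfold Int.fract; ring
  rw [harg] at h
  have hre : gU s (x - n₀) - ε * (x - n₀) - (gU s y₀ - ε * y₀)
        - (1/2 + s - |s - y₀| - ε) * (x - x₀)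
      = gU s (x - n₀) - gU s y₀ - (1/2 + s - |s - y₀|) * (x - x₀) := by
    unfold Int.fract; ring
  rw [hre]
  exact h

include hs hs' hε hε4 in
lemma w_rise_right (hy2 : y₀ < pE s ε) :
    ∀ᶠ x in 𝓝[>] x₀,
      |wf s ε x - wf s ε x₀ - (1/2 + s - |s - y₀| - ε) * (x - x₀)| ≤ (x - x₀)^2 := by
  have hmem : Ioo x₀ (n₀ + pE s ε) ∈ 𝓝[>] x₀ :=
    Ioo_mem_nhdsGT_of_mem ⟨le_refl _, by unfold Int.fract at hy2; linarith⟩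
  filter_upwards [hmem] with x hx
  have hfx : Int.fract x = x - ⌊x₀⌋ := by
    apply fract_eq_of_mem
    · have h0 := Int.fract_nonneg x₀; unfold Int.fract at h0; linarith [hx.1]
    · have h1 : x < n₀ + pE s ε := hx.2
      have h2 : pE s ε < 1 := by unfold pE; linarith
      linarith
  have hle : Int.fract x ≤ pE s ε := by rw [hfx]; linarith [hx.2]
  have hux : wf s ε x = gU s (Int.fract x) - ε * Int.fract x := by
    unfold wf Wc; rw [if_pos hle]
  have hux0 : wf s ε x₀ = gU s y₀ - ε * y₀ := by unfold wf Wc; rw [if_pos hy2.le]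
  rw [hux, hux0, hfx]
  have h := gU_taylor s y₀ (x - ⌊x₀⌋)
  have harg : x - n₀ - y₀ = x - x₀ := by unfold Int.fract; ring
  rw [harg] at h
  have hre : gU s (x - n₀) - ε * (x - n₀) - (gU s y₀ - ε * y₀)
        - (1/2 + s - |s - y₀| - ε) * (x - x₀)
      = gU s (x - n₀) - gU s y₀ - (1/2 + s - |s - y₀|) * (x - x₀) := by
    unfold Int.fract; ring
  rw [hre]
  exact h

include hs hs' hε hε4 in
lemma wf_x0_desc (hy1 : pE s ε ≤ y₀) (hy2 : y₀ ≤ qE s ε) :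
    wf s ε x₀ = mE s ε - (1/2+ε) * (y₀ - pE s ε) := by
  unfold wf Wc
  rcases eq_or_lt_of_le hy1 with he | hl
  · rw [if_pos he.ge, ← he]
    unfold mE; ring
  · rw [if_neg (by linarith), if_pos hy2]

include hs hs' hε hε4 in
lemma w_desc_right (hy1 : pE s ε ≤ y₀) (hy2 : y₀ < qE s ε) :
    ∀ᶠ x in 𝓝[>] x₀, wf s ε x = wf s ε x₀ + (-(1/2+ε)) * (x - x₀) := by
  have hmem : Ioo x₀ (n₀ + qE s ε) ∈ 𝓝[>] x₀ :=
    Ioo_mem_nhdsGT_of_mem ⟨le_refl _, by unfold Int.fract at hy2; linarith⟩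
  filter_upwards [hmem] with x hx
  have hq1 := qE_lt_one hs hs' hε hε4
  have hfx : Int.fract x = x - ⌊x₀⌋ := by
    apply fract_eq_of_mem
    · have h0 := Int.fract_nonneg x₀; unfold Int.fract at h0; linarith [hx.1]
    · linarith [hx.2]
  have hgt : pE s ε < Int.fract x := by
    rw [hfx]; unfold Int.fract at hy1; linarith [hx.1]
  have hle : Int.fract x ≤ qE s ε := by rw [hfx]; linarith [hx.2]
  have hux : wf s ε x = mE s ε - (1/2+ε) * (Int.fract x - pE s ε) := by
    unfold wf Wc; rw [if_neg (by linarith), if_pos hle]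
  rw [hux, wf_x0_desc hs hs' hε hε4 x₀ hy1 hy2.le, hfx]
  unfold Int.fract; ring

include hs hs' hε hε4 in
lemma w_desc_left (hy1 : pE s ε < y₀) (hy2 : y₀ ≤ qE s ε) :
    ∀ᶠ x in 𝓝[<] x₀, wf s ε x = wf s ε x₀ + (-(1/2+ε)) * (x - x₀) := by
  have hmem : Ioo (n₀ + pE s ε) x₀ ∈ 𝓝[<] x₀ :=
    Ioo_mem_nhdsLT_of_mem ⟨by unfold Int.fract at hy1; linarith, le_refl _⟩
  filter_upwards [hmem] with x hx
  have hfx : Int.fract x = x - ⌊x₀⌋ := by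
    apply fract_eq_of_mem
    · have := pE_pos (s := s) (ε := ε) hs hε4; linarith [hx.1]
    · have h1 := Int.fract_lt_one x₀; unfold Int.fract at h1; linarith [hx.2]
  have hgt : pE s ε < Int.fract x := by rw [hfx]; linarith [hx.1]
  have hle : Int.fract x ≤ qE s ε := by
    rw [hfx]; unfold Int.fract at hy2; linarith [hx.2]
  have hux : wf s ε x = mE s ε - (1/2+ε) * (Int.fract x - pE s ε) := by
    unfold wf Wc; rw [if_neg (by linarith), if_pos hle]
  rw [hux, wf_x0_desc hs hs' hε hε4 x₀ hy1.le hy2, hfx]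
  unfold Int.fract; ring

include hs hs' hε hε4 in
lemma wf_x0_flat (hy1 : qE s ε ≤ y₀) : wf s ε x₀ = 0 := by
  unfold wf
  rcases eq_or_lt_of_le hy1 with he | hl
  · rw [← he]; exact Wc_qE hs hs' hε hε4
  · unfold Wc
    rw [if_neg (by linarith [qE_gt_pE hs hs' hε hε4]), if_neg (by linarith)]

include hs hs' hε hε4 in
lemma w_flat_right (hy1 : qE s ε ≤ y₀) :
    ∀ᶠ x in 𝓝[>] x₀, wf s ε x = wf s ε x₀ + 0 * (x - x₀) := by
  have hmem : Ioo x₀ (n₀ + 1) ∈ 𝓝[>] x₀ :=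
    Ioo_mem_nhdsGT_of_mem ⟨le_refl _,
      by have := Int.fract_lt_one x₀; unfold Int.fract at this; linarith⟩
  filter_upwards [hmem] with x hx
  have hq0 : 0 < qE s ε := lt_trans (pE_pos hs hε4) (qE_gt_pE hs hs' hε hε4)
  have hfx : Int.fract x = x - ⌊x₀⌋ := by
    apply fract_eq_of_mem
    · have h0 := Int.fract_nonneg x₀; unfold Int.fract at h0; linarith [hx.1]
    · linarith [hx.2]
  have hgt : qE s ε < Int.fract x := by
    rw [hfx]; unfold Int.fract at hy1; linarith [hx.1]
  have hux : wf s ε x = 0 := by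
    unfold wf Wc
    rw [if_neg (by linarith [qE_gt_pE hs hs' hε hε4]), if_neg (by linarith)]
  rw [hux, wf_x0_flat hs hs' hε hε4 x₀ hy1]; ring

include hs hs' hε hε4 in
lemma w_flat_left_zero (hy0 : y₀ = 0) :
    ∀ᶠ x in 𝓝[<] x₀, wf s ε x = wf s ε x₀ + 0 * (x - x₀) := by
  have hq1 := qE_lt_one hs hs' hε hε4
  have hq0 : 0 < qE s ε := lt_trans (pE_pos hs hε4) (qE_gt_pE hs hs' hε hε4)
  have hx0n : x₀ = n₀ := by unfold Int.fract at hy0; linarith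
  have hmem : Ioo (n₀ - 1 + qE s ε) x₀ ∈ 𝓝[<] x₀ :=
    Ioo_mem_nhdsLT_of_mem ⟨by linarith, le_refl _⟩
  filter_upwards [hmem] with x hx
  have hx1 : n₀ - 1 + qE s ε < x := hx.1
  have hx2 : x < x₀ := hx.2
  have hfx : Int.fract x = x - (n₀ - 1) := by
    have hlow : (0:ℝ) ≤ x - (n₀ - 1) := by linarith
    have hhigh : x - (n₀ - 1) < 1 := by linarith
    have h := Int.fract_sub_intCast x (⌊x₀⌋ - 1)
    push_cast at h
    rw [Int.fract_eq_self.2 ⟨hlow, hhigh⟩] at h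
    linarith [h]
  have hgt : qE s ε < Int.fract x := by rw [hfx]; linarith
  have hux : wf s ε x = 0 := by
    unfold wf Wc
    rw [if_neg (by linarith [qE_gt_pE hs hs' hε hε4]), if_neg (by linarith)]
  have hux0 : wf s ε x₀ = 0 := by
    unfold wf Wc
    rw [hy0, if_pos (pE_pos hs hε4).le, gU_zero hs.le]; ring
  rw [hux, hux0]; ring

end WRepr

/- ## wf is a viscosity subsolution of the discounted equation -/

section WSub
variable {s ε : ℝ} (hs : 0 < s) (hs' : s ≤ 1/5) (hε : 0 < ε) (hε4 : ε ≤ s/4)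

include hs hs' hε hε4 in
lemma w_flat_left (x₀ : ℝ) (hy1 : qE s ε < Int.fract x₀) :
    ∀ᶠ x in 𝓝[<] x₀, wf s ε x = wf s ε x₀ + 0 * (x - x₀) := by
  have hq0 : 0 < qE s ε := lt_trans (pE_pos hs hε4) (qE_gt_pE hs hs' hε hε4)
  have hmem : Ioo ((⌊x₀⌋:ℝ) + qE s ε) x₀ ∈ 𝓝[<] x₀ :=
    Ioo_mem_nhdsLT_of_mem ⟨by unfold Int.fract at hy1; linarith, le_refl _⟩
  filter_upwards [hmem] with x hx
  have hfx : Int.fract x = x - ⌊x₀⌋ := by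
    apply fract_eq_of_mem
    · have : (⌊x₀⌋:ℝ) + qE s ε < x := hx.1; linarith
    · have h1 := Int.fract_lt_one x₀; unfold Int.fract at h1; linarith [hx.2]
  have hgt : qE s ε < Int.fract x := by rw [hfx]; linarith [hx.1]
  have hux : wf s ε x = 0 := by
    unfold wf Wc
    rw [if_neg (by linarith [qE_gt_pE hs hs' hε hε4]), if_neg (by linarith)]
  rw [hux, wf_x0_flat hs hs' hε hε4 x₀ hy1.le]; ring

set_option maxHeartbeats 2000000 in
include hs hs' hε hε4 in
lemma wf_viscSub :
    ViscSub1 (fun x r p => ε * r + Fk |3 / 2 + p| - Vs s x - 1) (wf s ε) := by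
  intro φ hφ x₀ hmax
  have hd : HasDerivAt φ (deriv φ x₀) x₀ := ((hφ.differentiable one_ne_zero) x₀).hasDerivAt
  show ε * wf s ε x₀ + Fk |3 / 2 + deriv φ x₀| - Vs s x₀ - 1 ≤ 0
  set d := deriv φ x₀ with hd_def
  have hy0 := Int.fract_nonneg x₀
  have hy1 := Int.fract_lt_one x₀
  have hp2s := pE_lt_2s (s := s) hε
  have hps := pE_ge_s (ε := ε) hs hε4
  have hqp := qE_gt_pE hs hs' hε hε4
  have hq1 := qE_lt_one hs hs' hε hε4
  have hm1 := mE_lt_one hs hs' hε hε4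
  have hε1 : ε ≤ 1 := by linarith
  rcases eq_or_lt_of_le hy0 with hA | hyp
  · -- fract x₀ = 0 : convex kink
    have hL := ev_eq_to_lower (w_flat_left_zero hs hs' hε hε4 x₀ hA.symm)
    have hdle : d ≤ 0 := test_max_left hd hmax hL
    have hR := ev_abs_to_lower (w_rise_right hs hs' hε hε4 x₀
      (by rw [← hA]; exact pE_pos hs hε4))
    have hdge : 1/2 + s - |s - Int.fract x₀| - ε ≤ d := test_max_right hd hmax hR
    rw [← hA, sub_zero, abs_of_nonneg hs.le] at hdge
    exact absurd hdge (by push_neg; linarith)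
  · rcases lt_trichotomy (Int.fract x₀) (pE s ε) with hB | hC | hD
    · -- rising region
      have hL := ev_abs_to_lower (w_rise_left hs hs' hε hε4 x₀ hyp hB.le)
      have hR := ev_abs_to_lower (w_rise_right hs hs' hε hε4 x₀ hB)
      have h1 : 1/2 + s - |s - Int.fract x₀| - ε ≤ d := test_max_right hd hmax hR
      have h2 : d ≤ 1/2 + s - |s - Int.fract x₀| - ε := test_max_left hd hmax hL
      have hdeq : d = 1/2 + s - |s - Int.fract x₀| - ε := le_antisymm h2 h1
      have habs : |s - Int.fract x₀| ≤ s := by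
        rw [abs_le]; constructor <;> linarith
      obtain ⟨VV, hVV⟩ : ∃ VV, VV = s - |s - Int.fract x₀| := ⟨_, rfl⟩
      have hVV0 : 0 ≤ VV := by rw [hVV]; linarith
      have hVVs : VV ≤ s := by
        rw [hVV]; have := abs_nonneg (s - Int.fract x₀); linarith
      have hq : |3/2 + d| = 2 + VV - ε := by
        rw [hdeq, hVV, abs_of_nonneg (by linarith)]; ring
      have hVs : Vs s x₀ = VV := by
        rw [Vs_tent x₀ (by linarith), hVV, abs_sub_comm]
      have hw : wf s ε x₀ = gU s (Int.fract x₀) - ε * Int.fract x₀ := by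
        unfold wf Wc; rw [if_pos hB.le]
      have hgUle : gU s (Int.fract x₀) ≤ s + s^2 := gU_le_peak hs hy0 (by linarith)
      rw [hq, hVs, hw]
      rcases le_or_gt ε VV with hVe | hVe
      · rw [Fk_of_two_le (by linarith)]
        have hgU1 : gU s (Int.fract x₀) ≤ 1 := by nlinarith
        have h5 : ε * (gU s (Int.fract x₀) - ε * Int.fract x₀) ≤ ε := by
          nlinarith [mul_nonneg (mul_nonneg hε.le hε.le) hy0]
        linarith
      · have hys : Int.fract x₀ ≤ s := by
          by_contra hgt; push_neg at hgt
          rw [hVV, abs_of_nonpos (by linarith)] at hVe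
          unfold pE at hB; linarith
        have hVVy : VV = Int.fract x₀ := by
          rw [hVV, abs_of_nonneg (by linarith)]; ring
        rw [Fk_eq_one (by linarith) (by linarith), hVVy, gU_eq_small hys]
        have hkey : 0 ≤ Int.fract x₀ * (1 - ε/2 - ε*Int.fract x₀/2 + ε^2) := by
          apply mul_nonneg hy0
          nlinarith [sq_nonneg ε, mul_nonneg hε.le hy0]
        nlinarith [hkey]
    · -- kink at pE (peak)
      have hL := ev_abs_to_lower (w_rise_left hs hs' hε hε4 x₀ hyp hC.le)
      have hR := ev_eq_to_lower (w_desc_right hs hs' hε hε4 x₀ hC.ge (by rw [hC]; exact hqp))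
      have h1 : -(1/2+ε) ≤ d := test_max_right hd hmax hR
      have h2 : d ≤ 1/2 + s - |s - Int.fract x₀| - ε := test_max_left hd hmax hL
      rw [hC, abs_of_nonpos (by linarith)] at h2
      have h2' : d ≤ 1/2 + ε := by unfold pE at h2; linarith
      have hqb : |3/2 + d| ≤ 2 + ε := abs_le.2 ⟨by linarith, by linarith⟩
      have hFk : Fk |3/2 + d| ≤ 1 + ε := Fk_le hqb hε.le
      have hVs : Vs s x₀ = 2*ε := by
        rw [Vs_tent x₀ (by rw [hC]; linarith), hC, abs_of_nonneg (by linarith)]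
        unfold pE; ring
      have hw : wf s ε x₀ = mE s ε := by
        rw [wf_x0_desc hs hs' hε hε4 x₀ hC.ge (by rw [hC]; exact hqp.le), hC]; ring
      have hεm : ε * mE s ε ≤ ε := by nlinarith [mul_nonneg hε.le (by linarith : (0:ℝ) ≤ 1 - mE s ε)]
      rw [hVs, hw]
      linarith
    · rcases lt_trichotomy (Int.fract x₀) (qE s ε) with hD1 | hD2 | hD3
      · -- descending region
        have hL := ev_eq_to_lower (w_desc_left hs hs' hε hε4 x₀ hD hD1.le)
        have hR := ev_eq_to_lower (w_desc_right hs hs' hε hε4 x₀ hD.le hD1)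
        have h1 : -(1/2+ε) ≤ d := test_max_right hd hmax hR
        have h2 : d ≤ -(1/2+ε) := test_max_left hd hmax hL
        have hdeq : d = -(1/2+ε) := le_antisymm h2 h1
        have hq : |3/2 + d| = 1 - ε := by
          rw [hdeq, abs_of_nonneg (by linarith)]; ring
        have hwle : wf s ε x₀ ≤ 1 := Wc_le_one hs hs' hε hε4 hy0
        have hVs := Vs_nonneg (s := s) x₀
        have hεw : ε * wf s ε x₀ ≤ ε := by
          nlinarith [mul_nonneg hε.le (by linarith : (0:ℝ) ≤ 1 - wf s ε x₀)]
        rw [hq, Fk_of_le_one (by linarith)]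
        linarith
      · -- kink at qE : convex
        have hL := ev_eq_to_lower (w_desc_left hs hs' hε hε4 x₀ hD hD2.le)
        have hR := ev_eq_to_lower (w_flat_right hs hs' hε hε4 x₀ hD2.ge)
        have h1 : (0:ℝ) ≤ d := test_max_right hd hmax hR
        have h2 : d ≤ -(1/2+ε) := test_max_left hd hmax hL
        exact absurd h1 (by push_neg; linarith)
      · -- flat region
        have hL := ev_eq_to_lower (w_flat_left hs hs' hε hε4 x₀ hD3)
        have hR := ev_eq_to_lower (w_flat_right hs hs' hε hε4 x₀ hD3.le)
        have h1 : (0:ℝ) ≤ d := test_max_right hd hmax hR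
        have h2 : d ≤ 0 := test_max_left hd hmax hL
        have hdeq : d = 0 := le_antisymm h2 h1
        have hVs := Vs_nonneg (s := s) x₀
        have hw : wf s ε x₀ = 0 := wf_x0_flat hs hs' hε hε4 x₀ hD3.le
        rw [hdeq, show |(3:ℝ)/2 + 0| = 3/2 by norm_num,
          Fk_eq_one (by norm_num) (by norm_num), hw]
        linarith

end WSub

/- ## Uniform closeness of wf to u0f -/

section Close
variable {s ε : ℝ} (hs : 0 < s) (hs' : s ≤ 1/5) (hε : 0 < ε) (hε4 : ε ≤ s/4)

include hs hs' hε hε4 in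
lemma u0_sub_wf_le (x : ℝ) : u0f s x - wf s ε x ≤ 20*ε := by
  have hy0 := Int.fract_nonneg x
  have hy1 := Int.fract_lt_one x
  have hp2s := pE_lt_2s (s := s) hε
  have hps := pE_ge_s (ε := ε) hs hε4
  have hqp := qE_gt_pE hs hs' hε hε4
  have hq2s := qE_ge_2s hs hs' hε hε4
  have hqle := qE_le hs hs' hε hε4
  have hmeq := mE_eq (ε := ε) hs hε4
  have hm0 := mE_pos hs hs' hε hε4
  have h2sx2 := two_s_lt_x2c (s := s) hs
  rcases le_or_gt (Int.fract x) (pE s ε) with h1 | h1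
  · have hu0 : u0f s x = gU s (Int.fract x) := by
      unfold u0f U0; rw [if_pos (by linarith)]
    have hw : wf s ε x = gU s (Int.fract x) - ε * Int.fract x := by
      unfold wf Wc; rw [if_pos h1]
    rw [hu0, hw]
    nlinarith [mul_nonneg hε.le hy0]
  · rcases le_or_gt (Int.fract x) (2*s) with h2 | h2
    · have hu0 : u0f s x = gU s (Int.fract x) := by
        unfold u0f U0; rw [if_pos h2]
      have hw : wf s ε x = mE s ε - (1/2+ε) * (Int.fract x - pE s ε) := by
        unfold wf Wc; rw [if_neg (by linarith), if_pos (by linarith)]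
      rw [hu0, hw, gU_eq_big (by linarith : s ≤ Int.fract x), hmeq]
      unfold pE
      nlinarith [sq_nonneg (Int.fract x - 2*s), mul_nonneg hε.le hy0]
    · rcases le_or_gt (Int.fract x) (qE s ε) with h3 | h3
      · have hu0 : u0f s x = (x2c s - Int.fract x)/2 := by
          unfold u0f U0; rw [if_neg (by linarith), if_pos (by linarith)]
        have hw : wf s ε x = mE s ε - (1/2+ε) * (Int.fract x - pE s ε) := by
          unfold wf Wc; rw [if_neg (by linarith), if_pos h3]
        rw [hu0, hw, hmeq]
        unfold pE x2c
        nlinarith [mul_nonneg hε.le hy0]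
      · rcases le_or_gt (Int.fract x) (x2c s) with h4 | h4
        · have hu0 : u0f s x = (x2c s - Int.fract x)/2 := by
            unfold u0f U0; rw [if_neg (by linarith), if_pos h4]
          have hw : wf s ε x = 0 := by
            unfold wf Wc; rw [if_neg (by linarith), if_neg (by linarith)]
          have hlow : 2*(mE s ε) - 4*ε*(mE s ε) ≤ mE s ε / (1/2+ε) := by
            rw [le_div_iff₀ (by linarith)]
            nlinarith [mul_nonneg (mul_nonneg hε.le hε.le) hm0.le]
          have hqlow : pE s ε + 2*(mE s ε) - 4*ε*(mE s ε) ≤ qE s ε := by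
            unfold qE; linarith
          rw [hu0, hw]
          have hmub : mE s ε ≤ s + s^2 := mE_le_peak hs hs' hε hε4
          unfold pE x2c at *
          nlinarith [mul_nonneg hε.le hm0.le]
        · have hu0 : u0f s x = 0 := by
            unfold u0f U0; rw [if_neg (by linarith), if_neg (by linarith)]
          have hw : wf s ε x = 0 := by
            unfold wf Wc; rw [if_neg (by linarith), if_neg (by linarith)]
          rw [hu0, hw]; linarith

end Close

/- ## Comparison principle -/

lemma periodic_ubound {f : ℝ → ℝ} (hc : Continuous f) (hp : Function.Periodic f 1) :
    ∃ M, ∀ y, f y ≤ M := by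
  obtain ⟨a, _, ha⟩ := isCompact_Icc.exists_isMaxOn (α := ℝ)
    (nonempty_Icc.2 (by norm_num : (0:ℝ) ≤ 1)) hc.continuousOn
  refine ⟨f a, fun y => ?_⟩
  have h1 : f (y - (⌊y⌋ : ℤ) * 1) = f y := hp.sub_int_mul_eq ⌊y⌋
  have h2 : y - (⌊y⌋ : ℝ) * 1 = Int.fract y := by unfold Int.fract; ring
  rw [h2] at h1
  rw [← h1]
  exact ha ⟨Int.fract_nonneg y, (Int.fract_lt_one y).le⟩

lemma periodic_lbound {f : ℝ → ℝ} (hc : Continuous f) (hp : Function.Periodic f 1) :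
    ∃ m, ∀ y, m ≤ f y := by
  obtain ⟨M, hM⟩ := periodic_ubound hc.neg (by intro x; simp [hp x])
  exact ⟨-M, fun y => by have := hM y; simp at this; linarith⟩

section Comparison
variable {s ε : ℝ} (hs : 0 < s) (hs' : s ≤ 1/5) (hε : 0 < ε)

set_option maxHeartbeats 2000000 in
include hs hs' hε in
lemma comparison {w₁ w₂ : ℝ → ℝ}
    (h₁c : Continuous w₁) (h₁p : Function.Periodic w₁ 1)
    (h₂c : Continuous w₂) (h₂p : Function.Periodic w₂ 1)
    (h₁ : ViscSub1 (fun x r p => ε * r + Fk |3 / 2 + p| - Vs s x - 1) w₁)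
    (h₂ : ViscSuper1 (fun x r p => ε * r + Fk |3 / 2 + p| - Vs s x - 1) w₂) :
    ∀ x, w₁ x ≤ w₂ x := by
  intro x
  by_contra hcon
  push_neg at hcon
  obtain ⟨M₁, hM₁⟩ := periodic_ubound h₁c h₁p
  obtain ⟨m₂, hm₂⟩ := periodic_lbound h₂c h₂p
  obtain ⟨δ, hδdef⟩ : ∃ δ, δ = w₁ x - w₂ x := ⟨_, rfl⟩
  have hδ : 0 < δ := by rw [hδdef]; linarith
  obtain ⟨K, hKdef⟩ : ∃ K, K = M₁ - m₂ - δ := ⟨_, rfl⟩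
  have hK0 : 0 ≤ K := by
    rw [hKdef, hδdef]; linarith [hM₁ x, hm₂ x]
  obtain ⟨α, hαdef⟩ : ∃ α, α = max (K + 1) (K/(ε*δ)^2 + 1) := ⟨_, rfl⟩
  have hα1 : K + 1 ≤ α := by rw [hαdef]; exact le_max_left _ _
  have hα2 : K/(ε*δ)^2 + 1 ≤ α := by rw [hαdef]; exact le_max_right _ _
  have hα0 : 0 < α := by linarith
  obtain ⟨Φ, hΦdef⟩ : ∃ Φ : ℝ × ℝ → ℝ,
      Φ = fun q => w₁ q.1 - w₂ q.2 - α * (q.1 - q.2)^2 := ⟨_, rfl⟩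
  have hΦc : Continuous Φ := by
    rw [hΦdef]
    exact ((h₁c.comp continuous_fst).sub (h₂c.comp continuous_snd)).sub
      (continuous_const.mul ((continuous_fst.sub continuous_snd).pow 2))
  have hDcpt : IsCompact (Icc x (x+1) ×ˢ Icc (x-1) (x+2)) :=
    isCompact_Icc.prod isCompact_Icc
  have hDne : ((x, x) : ℝ × ℝ) ∈ Icc x (x+1) ×ˢ Icc (x-1) (x+2) := by
    constructor <;> constructor <;> simp <;> linarith
  obtain ⟨ab, habmem, habmax⟩ := hDcpt.exists_isMaxOn ⟨(x,x), hDne⟩ hΦc.continuousOn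
  obtain ⟨a, b⟩ := ab
  -- global maximality
  have hglobal : ∀ p q : ℝ, Φ (p, q) ≤ Φ (a, b) := by
    intro p q
    have hper : Φ (p - (⌊p - x⌋ : ℤ), q - (⌊p - x⌋ : ℤ)) = Φ (p, q) := by
      rw [hΦdef]
      simp only
      have e1 : w₁ (p - (⌊p - x⌋ : ℤ) * 1) = w₁ p := h₁p.sub_int_mul_eq _
      have e2 : w₂ (q - (⌊p - x⌋ : ℤ) * 1) = w₂ q := h₂p.sub_int_mul_eq _
      rw [mul_one] at e1 e2
      rw [e1, e2]
      ring_nf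
    have hpmem : p - (⌊p - x⌋ : ℝ) ∈ Icc x (x+1) := by
      have h1 := Int.fract_nonneg (p - x)
      have h2 := Int.fract_lt_one (p - x)
      unfold Int.fract at h1 h2
      constructor <;> [linarith; linarith]
    rcases le_or_gt (|p - q|) 1 with hclose | hfar
    · have hqmem : q - (⌊p - x⌋ : ℝ) ∈ Icc (x-1) (x+2) := by
        rw [abs_le] at hclose
        obtain ⟨hp1, hp2⟩ := hpmem
        constructor <;> linarith
      have := habmax (Set.mk_mem_prod hpmem hqmem)
      rw [← hper]
      exact this
    · have hbig : 1 ≤ (p - q)^2 := by nlinarith [abs_nonneg (p - q), sq_abs (p - q)]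
      have h1 : Φ (p, q) ≤ M₁ - m₂ - α := by
        rw [hΦdef]
        simp only
        have := hM₁ p
        have := hm₂ q
        nlinarith
      have h2 : Φ (x, x) ≤ Φ (a, b) := habmax hDne
      have h3 : Φ (x, x) = δ := by rw [hΦdef, hδdef]; simp
      linarith
  -- the two test functions
  have hΦab : δ + α * (a - b)^2 ≤ w₁ a - w₂ b := by
    have h2 := hglobal x x
    have h3 : Φ (x, x) = δ := by rw [hΦdef, hδdef]; simp
    have h4 : Φ (a, b) = w₁ a - w₂ b - α * (a - b)^2 := by rw [hΦdef]
    linarith [h2, h3, h4]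
  -- subsolution test at a
  have hderφ : HasDerivAt (fun t : ℝ => w₂ b + α * (t - b)^2) (α * (2 * (a - b))) a := by
    have h1 : HasDerivAt (fun t : ℝ => (t - b)^2) (2 * (a - b)) a := by
      simpa using ((hasDerivAt_id a).sub_const b).fun_pow 2
    exact (h1.const_mul α).const_add (w₂ b)
  have hφC : ContDiff ℝ 1 (fun t : ℝ => w₂ b + α * (t - b)^2) :=
    contDiff_const.add (contDiff_const.mul ((contDiff_id.sub contDiff_const).pow 2))
  have hmax1 : IsLocalMax (w₁ - fun t : ℝ => w₂ b + α * (t - b)^2) a := by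
    apply Filter.Eventually.of_forall
    intro t
    have e1 : (w₁ - fun t : ℝ => w₂ b + α * (t - b)^2) t = Φ (t, b) := by
      rw [hΦdef]; simp only [Pi.sub_apply]; ring
    have e2 : (w₁ - fun t : ℝ => w₂ b + α * (t - b)^2) a = Φ (a, b) := by
      rw [hΦdef]; simp only [Pi.sub_apply]; ring
    rw [e1, e2]
    exact hglobal t b
  have hsub := h₁ _ hφC a hmax1
  rw [hderφ.deriv] at hsub
  -- supersolution test at b
  have hderψ : HasDerivAt (fun t : ℝ => w₁ a - α * (a - t)^2) (α * (2 * (a - b))) b := by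
    have h1 : HasDerivAt (fun t : ℝ => (a - t)^2) (-(2 * (a - b))) b := by
      have h2 : HasDerivAt (fun t : ℝ => a - t) (-1) b := (hasDerivAt_id b).const_sub a
      have h3 := h2.fun_pow 2
      exact h3.congr_deriv (by ring)
    have h4 := (h1.const_mul α).const_sub (w₁ a)
    exact h4.congr_deriv (by ring)
  have hψC : ContDiff ℝ 1 (fun t : ℝ => w₁ a - α * (a - t)^2) :=
    contDiff_const.sub (contDiff_const.mul ((contDiff_const.sub contDiff_id).pow 2))
  have hmin1 : IsLocalMin (w₂ - fun t : ℝ => w₁ a - α * (a - t)^2) b := by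
    apply Filter.Eventually.of_forall
    intro t
    have e1 : (w₂ - fun t : ℝ => w₁ a - α * (a - t)^2) t = -Φ (a, t) := by
      rw [hΦdef]; simp only [Pi.sub_apply]; ring
    have e2 : (w₂ - fun t : ℝ => w₁ a - α * (a - t)^2) b = -Φ (a, b) := by
      rw [hΦdef]; simp only [Pi.sub_apply]; ring
    rw [e1, e2]
    linarith [hglobal a t]
  have hsup := h₂ _ hψC b hmin1
  rw [hderψ.deriv] at hsup
  -- combine
  have hlip := Vs_lipschitz hs hs' a b
  have habs1 : Vs s a - Vs s b ≤ |a - b| :=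
    le_trans (le_abs_self _) hlip
  have hcomb : ε * (w₁ a - w₂ b) ≤ |a - b| := by
    simp only at hsub hsup
    nlinarith [hsub, hsup]
  have hsq : 0 ≤ α * (a - b)^2 := by positivity
  have hwab : δ ≤ w₁ a - w₂ b := by linarith
  have h5 : ε * δ ≤ |a - b| := by nlinarith
  have h6 : α * (a - b)^2 ≤ K := by
    rw [hKdef]; linarith [hM₁ a, hm₂ b]
  have hεδ0 : 0 < ε * δ := by positivity
  have h7 : (ε * δ)^2 ≤ (a - b)^2 := by
    nlinarith [sq_abs (a - b), abs_nonneg (a - b)]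
  have h9 : α * (ε * δ)^2 ≤ K := le_trans (by nlinarith) h6
  have hεδ2 : 0 < (ε * δ)^2 := by positivity
  have hKK : K / (ε * δ)^2 * (ε * δ)^2 = K := div_mul_cancel₀ K hεδ2.ne'
  nlinarith [hα2, hεδ2, hKK, h9]

end Comparison

/- ## Transfer lemmas and the main theorem -/

section Transfer
variable {s ε : ℝ} (hs : 0 < s) (hs' : s ≤ 1/5) (hε : 0 < ε)

include hε in
lemma transfer_sub {v : ℝ → ℝ}
    (h : ViscSub1 (fun x r p => ε * r + Fk |3 / 2 + p| - Vs s x) v) :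
    ViscSub1 (fun x r p => ε * r + Fk |3 / 2 + p| - Vs s x - 1) (fun t => v t + 1/ε) := by
  intro φ hφ x₀ hmax
  have hmax' : IsLocalMax (v - φ) x₀ := by
    have := hmax
    unfold IsLocalMax IsMaxFilter at this ⊢
    filter_upwards [this] with t ht
    simp only [Pi.sub_apply] at ht ⊢
    linarith
  have hsub := h φ hφ x₀ hmax'
  simp only at hsub ⊢
  have hinv : ε * (1/ε) = 1 := by field_simp
  nlinarith [hsub, hinv]

include hε in
lemma transfer_super {v : ℝ → ℝ}
    (h : ViscSuper1 (fun x r p => ε * r + Fk |3 / 2 + p| - Vs s x) v) :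
    ViscSuper1 (fun x r p => ε * r + Fk |3 / 2 + p| - Vs s x - 1) (fun t => v t + 1/ε) := by
  intro φ hφ x₀ hmin
  have hmin' : IsLocalMin (v - φ) x₀ := by
    have := hmin
    unfold IsLocalMin IsMinFilter at this ⊢
    filter_upwards [this] with t ht
    simp only [Pi.sub_apply] at ht ⊢
    linarith
  have hsup := h φ hφ x₀ hmin'
  simp only at hsup ⊢
  have hinv : ε * (1/ε) = 1 := by field_simp
  nlinarith [hsup, hinv]

include hs hs' hε in
lemma u0_viscSuper_eps :
    ViscSuper1 (fun x r p => ε * r + Fk |3 / 2 + p| - Vs s x - 1) (u0f s) := by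
  intro φ hφ x₀ hmin
  have h1 := u0_viscSuper hs hs' φ hφ x₀ hmin
  have h0 := u0f_nonneg hs hs' x₀
  simp only at h1 ⊢
  nlinarith [mul_nonneg hε.le h0]

end Transfer


theorem stmt13 (s : ℝ) (hs : 0 < s) (hs' : s ≤ 1 / 5)
    (u : ℝ → ℝ → ℝ)
    (hu : ∀ ε : ℝ, 0 < ε → Continuous (u ε) ∧ Function.Periodic (u ε) 1 ∧
      ViscSol1 (fun x r p => ε * r + Fk |3 / 2 + p| - Vs s x) (u ε)) :
    ∃ u0 : ℝ → ℝ, Continuous u0 ∧ Function.Periodic u0 1 ∧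
      ViscSol1 (fun x _ p => Fk |3 / 2 + p| - Vs s x - 1) u0 ∧
      TendstoUniformly (fun ε x => u ε x + 1 / ε) u0 (𝓝[>] (0 : ℝ)) := by
  refine ⟨u0f s, u0f_cont hs hs', u0f_periodic s, ⟨u0_viscSub hs hs', u0_viscSuper hs hs'⟩, ?_⟩
  rw [Metric.tendstoUniformly_iff]
  intro δ hδ
  have he0 : (0:ℝ) < min (s/4) (δ/21) := by
    apply lt_min (by linarith) (by linarith)
  have hmem : Ioo (0:ℝ) (min (s/4) (δ/21)) ∈ 𝓝[>] (0:ℝ) :=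
    Ioo_mem_nhdsGT_of_mem ⟨le_refl _, he0⟩
  filter_upwards [hmem] with ε hεm
  have hε : 0 < ε := hεm.1
  have hε4 : ε ≤ s/4 := le_of_lt (lt_of_lt_of_le hεm.2 (min_le_left _ _))
  have hεδ : 20*ε < δ := by
    have := lt_of_lt_of_le hεm.2 (min_le_right _ _)
    linarith
  obtain ⟨hcont, hper, hsol⟩ := hu ε hε
  intro xx
  -- the shifted solution
  have h₁c : Continuous (fun t => u ε t + 1/ε) := hcont.add continuous_const
  have h₁p : Function.Periodic (fun t => u ε t + 1/ε) 1 := by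
    intro t; simp [hper t]
  have h₁sub := transfer_sub hε hsol.1
  have h₁sup := transfer_super hε hsol.2
  -- upper bound : u ε + 1/ε ≤ u0
  have hupper := comparison hs hs' hε h₁c h₁p (u0f_cont hs hs') (u0f_periodic s)
    h₁sub (u0_viscSuper_eps hs hs' hε) xx
  -- lower bound : wf ≤ u ε + 1/ε
  have hlower := comparison hs hs' hε (wf_cont hs hs' hε hε4) wf_periodic h₁c h₁p
    (wf_viscSub hs hs' hε hε4) h₁sup xx
  have hclose := u0_sub_wf_le hs hs' hε hε4 xx
  rw [Real.dist_eq, abs_of_nonneg (by linarith)]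
  linarith
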